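/- For every integer n ≥ 0, every real η, and every ε > 0, one has (1/2πi)·∫_{ε+iℝ} e^{v² + 2ηv}·v^{−n−1} dv = (2ⁿ/(√π·n!))·∫_0^∞ ξⁿ·e^{−(ξ−η)²} dξ. -/

import Mathlib

/-! For `Re v > 0` one has `v^{-n-1} = (1/n!) ∫_0^∞ ξⁿ e^{-ξv} dξ`. Substituting this on the line
`v = ε + it`, the double integrand is dominated by `e^{-t²}` times `ξⁿ e^{-εξ}`, so the order of
integration can be swapped; the inner integral `∫ e^{v² + (2η-ξ)v} dt` is a Gaussian integral equal
to `√π e^{-(2η-ξ)²/4}`, and the substitution `ξ = 2x` gives the right-hand side. -/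

/-- `(1/2πi)·∫_{ε+iℝ} f(v) dv`, defined as `(1/2π)·∫_{−∞}^∞ f(ε+it) dt` (line oriented
upward). -/
noncomputable def lineIntegral (ε : ℝ) (f : ℂ → ℂ) : ℂ :=
  (1 / (2 * (Real.pi : ℂ))) * ∫ t : ℝ, f ((ε : ℂ) + t * Complex.I)

open MeasureTheory Set Filter Complex Topology
open scoped Nat

lemma integrableOn_pow_mul_exp_neg_mul_Ioi {c : ℝ} (hc : 0 < c) (n : ℕ) :
    IntegrableOn (fun x : ℝ => x ^ n * Real.exp (-(c * x))) (Ioi 0) := by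
  refine (integrableOn_rpow_mul_exp_neg_mul_rpow (s := n) (by linarith [n.cast_nonneg (α := ℝ)])
    one_pos hc).congr_fun (fun x _ => ?_) measurableSet_Ioi
  simp [Real.rpow_natCast]

lemma tendsto_pow_mul_exp_neg_mul_atTop {c : ℝ} (hc : 0 < c) (n : ℕ) :
    Tendsto (fun x : ℝ => x ^ n * Real.exp (-(c * x))) atTop (𝓝 0) := by
  refine (tendsto_rpow_mul_exp_neg_mul_atTop_nhds_zero n c hc).congr fun x => ?_
  rw [Real.rpow_natCast, neg_mul]

lemma norm_ofReal_pow_mul_cexp_neg_mul (n : ℕ) (x : ℝ) (w : ℂ) :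
    ‖(x : ℂ) ^ n * cexp (-(x * w))‖ = |x| ^ n * Real.exp (-(w.re * x)) := by
  simp [Complex.norm_exp, mul_comm]

lemma integrableOn_ofReal_pow_mul_cexp_neg_mul_Ioi {w : ℂ} (hw : 0 < w.re) (n : ℕ) :
    IntegrableOn (fun x : ℝ => (x : ℂ) ^ n * cexp (-(x * w))) (Ioi 0) := by
  refine (integrableOn_pow_mul_exp_neg_mul_Ioi hw n).mono' (by fun_prop) ?_
  filter_upwards [ae_restrict_mem measurableSet_Ioi] with x hx
  rw [norm_ofReal_pow_mul_cexp_neg_mul, abs_of_pos hx]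

lemma tendsto_ofReal_pow_mul_cexp_neg_mul_atTop {w : ℂ} (hw : 0 < w.re) (n : ℕ) :
    Tendsto (fun x : ℝ => (x : ℂ) ^ n * cexp (-(x * w))) atTop (𝓝 0) := by
  rw [tendsto_zero_iff_norm_tendsto_zero]
  refine (tendsto_pow_mul_exp_neg_mul_atTop hw n).congr' ?_
  filter_upwards [eventually_ge_atTop 0] with x hx
  rw [norm_ofReal_pow_mul_cexp_neg_mul, abs_of_nonneg hx]

theorem integral_ofReal_pow_mul_cexp_neg_mul_Ioi (n : ℕ) {w : ℂ} (hw : 0 < w.re) :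
    ∫ x in Ioi (0 : ℝ), (x : ℂ) ^ n * cexp (-(x * w)) = n ! / w ^ (n + 1) := by
  have hw0 : w ≠ 0 := fun h => by simp [h] at hw
  have hexp : ∀ x : ℝ, HasDerivAt (fun y : ℝ => cexp (-(y * w)) / -w) (cexp (-(x * w))) x := by
    intro x
    refine ((((hasDerivAt_id (x : ℂ)).mul_const w).neg.cexp).div_const (-w)).comp_ofReal
      |>.congr_deriv ?_
    change cexp (-(x * w)) * -(1 * w) / -w = _
    field_simp
  induction n with
  | zero =>
    simpa [neg_mul, mul_comm] using integral_exp_mul_complex_Ioi (a := -w) (by simpa using hw) 0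
  | succ n ih =>
    have hpow : ∀ x : ℝ, HasDerivAt (fun y : ℝ => (y : ℂ) ^ (n + 1)) ((n + 1) * (x : ℂ) ^ n) x :=
      fun x => by simpa using (hasDerivAt_pow (n + 1) (x : ℂ)).comp_ofReal
    have hcont : Continuous ((fun y : ℝ => (y : ℂ) ^ (n + 1)) * fun y : ℝ => cexp (-(y * w)) / -w) :=
      (by fun_prop : Continuous fun y : ℝ => (y : ℂ) ^ (n + 1) * (cexp (-(y * w)) / -w))
    have hibp := integral_Ioi_mul_deriv_eq_deriv_mul (fun x _ => hpow x) (fun x _ => hexp x)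
      (integrableOn_ofReal_pow_mul_cexp_neg_mul_Ioi hw (n + 1))
      (IntegrableOn.congr_fun ((integrableOn_ofReal_pow_mul_cexp_neg_mul_Ioi hw n).const_mul
        ((n + 1) / -w)) (fun x _ => by simp only [Pi.mul_apply]; ring) measurableSet_Ioi)
      ((hcont.tendsto' 0 0 (by simp)).mono_left nhdsWithin_le_nhds)
      (by simpa [Pi.mul_def, mul_div_assoc] using
        (tendsto_ofReal_pow_mul_cexp_neg_mul_atTop hw (n + 1)).div_const (-w))
    have hsum : ∫ x in Ioi (0 : ℝ), (n + 1) * (x : ℂ) ^ n * (cexp (-(x * w)) / -w)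
        = -((n + 1) / w) * ∫ x in Ioi (0 : ℝ), (x : ℂ) ^ n * cexp (-(x * w)) := by
      rw [← integral_const_mul]
      congr with x
      ring
    rw [hibp, hsum, ih, Nat.factorial_succ]
    push_cast
    field_simp
    ring

theorem zpow_neg_sub_one_eq_integral (n : ℕ) {w : ℂ} (hw : 0 < w.re) :
    w ^ (-(n : ℤ) - 1) = (n ! : ℂ)⁻¹ * ∫ x in Ioi (0 : ℝ), (x : ℂ) ^ n * cexp (-(x * w)) := by
  have hw0 : w ≠ 0 := fun h => by simp [h] at hw
  rw [integral_ofReal_pow_mul_cexp_neg_mul_Ioi n hw, show -(n : ℤ) - 1 = -((n + 1 : ℕ) : ℤ) by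
    push_cast; ring, zpow_neg, zpow_natCast]
  field_simp [Nat.cast_ne_zero.mpr n.factorial_ne_zero]

theorem integral_cexp_sq_add_mul_vertical (z a : ℂ) :
    ∫ t : ℝ, cexp ((z + t * I) ^ 2 + a * (z + t * I)) = Real.sqrt Real.pi * cexp (-a ^ 2 / 4) := by
  have hquad : ∀ t : ℝ, (z + t * I) ^ 2 + a * (z + t * I)
      = -1 * (t : ℂ) ^ 2 + I * (2 * z + a) * t + (z ^ 2 + a * z) := fun t => by
    linear_combination (t : ℂ) ^ 2 * I_sq
  simp_rw [hquad]
  rw [integral_cexp_quadratic (by simp), Real.sqrt_eq_rpow, ofReal_cpow Real.pi_pos.le]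
  norm_num
  congr 1
  linear_combination (2 * z + a) ^ 2 / 4 * I_sq

lemma norm_cexp_sq_add_mul_vertical (ε t a : ℝ) :
    ‖cexp ((ε + t * I) ^ 2 + a * (ε + t * I))‖ = Real.exp (ε ^ 2 + a * ε) * Real.exp (-t ^ 2) := by
  rw [Complex.norm_exp, ← Real.exp_add]
  congr 1
  simp [sq]
  ring

lemma integrable_vertical_laplace_integrand (n : ℕ) (η : ℝ) {ε : ℝ} (hε : 0 < ε) :
    Integrable (fun p : ℝ × ℝ => (p.2 : ℂ) ^ n *
        cexp ((ε + p.1 * I) ^ 2 + ((2 * η - p.2 : ℝ) : ℂ) * (ε + p.1 * I)))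
      ((volume : Measure ℝ).prod (volume.restrict (Ioi 0))) := by
  have hgauss : Integrable fun t : ℝ => Real.exp (ε ^ 2 + 2 * η * ε) * Real.exp (-t ^ 2) := by
    simpa using (integrable_exp_neg_mul_sq one_pos).const_mul (Real.exp (ε ^ 2 + 2 * η * ε))
  refine (hgauss.mul_prod (integrableOn_pow_mul_exp_neg_mul_Ioi hε n)).mono'
    (by fun_prop) ?_
  filter_upwards [Measure.quasiMeasurePreserving_snd.ae (ae_restrict_mem measurableSet_Ioi)]
    with p (hp : 0 < p.2)
  rw [norm_mul, norm_pow, norm_real, Real.norm_of_nonneg hp.le, norm_cexp_sq_add_mul_vertical]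
  have hsplit : Real.exp (ε ^ 2 + (2 * η - p.2) * ε)
      = Real.exp (ε ^ 2 + 2 * η * ε) * Real.exp (-(ε * p.2)) := by
    rw [← Real.exp_add]; ring_nf
  rw [hsplit]
  exact le_of_eq (by ring)

theorem integral_vertical_cexp_mul_zpow (n : ℕ) (η : ℝ) {ε : ℝ} (hε : 0 < ε) :
    ∫ t : ℝ, cexp ((ε + t * I) ^ 2 + 2 * η * (ε + t * I)) * (ε + t * I) ^ (-(n : ℤ) - 1)
      = (n ! : ℂ)⁻¹ * Real.sqrt Real.pi *
          ((∫ x in Ioi (0 : ℝ), x ^ n * Real.exp (-(2 * η - x) ^ 2 / 4) : ℝ) : ℂ) := by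
  calc ∫ t : ℝ, cexp ((ε + t * I) ^ 2 + 2 * η * (ε + t * I)) * (ε + t * I) ^ (-(n : ℤ) - 1)
      = ∫ t : ℝ, (n ! : ℂ)⁻¹ * ∫ x in Ioi (0 : ℝ),
          (x : ℂ) ^ n * cexp ((ε + t * I) ^ 2 + ((2 * η - x : ℝ) : ℂ) * (ε + t * I)) := by
        congr with t
        rw [zpow_neg_sub_one_eq_integral n (by simpa using hε), mul_left_comm,
          ← integral_const_mul]
        congr 2 with x
        rw [mul_left_comm, ← Complex.exp_add]
        push_cast
        ring_nf
    _ = (n ! : ℂ)⁻¹ * ∫ x in Ioi (0 : ℝ), ∫ t : ℝ,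
          (x : ℂ) ^ n * cexp ((ε + t * I) ^ 2 + ((2 * η - x : ℝ) : ℂ) * (ε + t * I)) := by
        rw [integral_const_mul, integral_integral_swap
          (integrable_vertical_laplace_integrand n η hε)]
    _ = (n ! : ℂ)⁻¹ * ∫ x in Ioi (0 : ℝ),
          (((Real.sqrt Real.pi * (x ^ n * Real.exp (-(2 * η - x) ^ 2 / 4))) : ℝ) : ℂ) := by
        congr with x
        rw [integral_const_mul, integral_cexp_sq_add_mul_vertical]
        push_cast
        ring
    _ = _ := by
        rw [integral_complex_ofReal, integral_const_mul]
        push_cast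
        ring

theorem integral_Ioi_pow_mul_exp_neg_sub_sq_div_four (n : ℕ) (η : ℝ) :
    ∫ x in Ioi (0 : ℝ), x ^ n * Real.exp (-(2 * η - x) ^ 2 / 4)
      = 2 ^ (n + 1) * ∫ x in Ioi (0 : ℝ), x ^ n * Real.exp (-(x - η) ^ 2) := by
  have hscale := integral_comp_mul_left_Ioi
    (fun x : ℝ => x ^ n * Real.exp (-(2 * η - x) ^ 2 / 4)) 0 two_pos
  have hsub : ∫ x in Ioi (0 : ℝ), (2 * x) ^ n * Real.exp (-(2 * η - 2 * x) ^ 2 / 4)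
      = 2 ^ n * ∫ x in Ioi (0 : ℝ), x ^ n * Real.exp (-(x - η) ^ 2) := by
    rw [← integral_const_mul]
    congr with x
    rw [mul_pow, mul_assoc]
    ring_nf
  rw [mul_zero, hsub, smul_eq_mul] at hscale
  rw [pow_succ, mul_comm _ (2 : ℝ), mul_assoc, hscale]
  simp

/-- `(1/2πi)·∫_{ε+iℝ} e^{v² + 2ηv}·v^{−n−1} dv = (2ⁿ/(√π·n!))·∫_0^∞ ξⁿ·e^{−(ξ−η)²} dξ`. -/
theorem line_integral_Phi (n : ℕ) (η ε : ℝ) (hε : 0 < ε) :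
    lineIntegral ε (fun v => Complex.exp (v ^ 2 + 2 * (η : ℂ) * v) * v ^ (-(n : ℤ) - 1))
      = (((2 ^ n / (Real.sqrt Real.pi * (n.factorial : ℝ))) *
          ∫ ξ in Set.Ioi (0 : ℝ), ξ ^ n * Real.exp (-(ξ - η) ^ 2) : ℝ) : ℂ) := by
  have hπ : (Real.sqrt Real.pi : ℂ) ^ 2 = Real.pi := by
    exact_mod_cast Real.sq_sqrt Real.pi_pos.le
  have hπ0 : (Real.sqrt Real.pi : ℂ) ≠ 0 := by exact_mod_cast (Real.sqrt_pos.2 Real.pi_pos).ne'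
  have hfac : (n ! : ℂ) ≠ 0 := Nat.cast_ne_zero.mpr n.factorial_ne_zero
  rw [lineIntegral, integral_vertical_cexp_mul_zpow n η hε,
    integral_Ioi_pow_mul_exp_neg_sub_sq_div_four]
  push_cast
  field_simp
  linear_combination (2 : ℂ) ^ n * 2 * (∫ ξ in Ioi (0 : ℝ), ξ ^ n * Real.exp (-(ξ - η) ^ 2) : ℝ) * hπ
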